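/- Let (A,m) be local and I a proper ideal of A. Then the amalgamated duplication A ⋈ I := {(a, a+i) : a ∈ A, i ∈ I} is a Prüfer ring if and only if A is a Prüfer ring and I = aI for all a ∈ m \ Z(A). -/

import Mathlib

variable {A B : Type*} [CommRing A] [CommRing B]

/-- The amalgamation `A ⋈^f J` of `A` and `B` along the ideal `J` with respect to `f`,
as a subring of `A × B`. -/
def amalg (f : A →+* B) (J : Ideal B) : Subring (A × B) where
  carrier := {p | ∃ a, ∃ j ∈ J, p = (a, f a + j)}
  zero_mem' := ⟨0, 0, J.zero_mem, by simp [Prod.ext_iff]⟩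
  one_mem' := ⟨1, 0, J.zero_mem, by simp [Prod.ext_iff]⟩
  add_mem' := by
    rintro _ _ ⟨a, j, hj, rfl⟩ ⟨a', j', hj', rfl⟩
    exact ⟨a + a', j + j', J.add_mem hj hj', by simp [Prod.ext_iff]; ring⟩
  neg_mem' := by
    rintro _ ⟨a, j, hj, rfl⟩
    exact ⟨-a, -j, J.neg_mem hj, by simp [Prod.ext_iff]; ring⟩
  mul_mem' := by
    rintro _ _ ⟨a, j, hj, rfl⟩ ⟨a', j', hj', rfl⟩
    exact ⟨a * a', f a * j' + j * f a' + j * j',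
      J.add_mem (J.add_mem (J.mul_mem_left _ hj') (J.mul_mem_right _ hj)) (J.mul_mem_right _ hj),
      by simp [Prod.ext_iff]; ring⟩

/-- The set of zero-divisors of a ring. -/
def zdSet (R : Type*) [CommRing R] : Set R := {a | ∃ b, b ≠ 0 ∧ a * b = 0}

/-- The content ideal of a polynomial: the ideal generated by its coefficients. -/
def contentIdeal {R : Type*} [CommRing R] (p : Polynomial R) : Ideal R :=
  Ideal.span (Set.range p.coeff)

/-- A polynomial is Gaussian if `c(ph) = c(p) c(h)` for every polynomial `h`. -/
def IsGaussianPoly {R : Type*} [CommRing R] (p : Polynomial R) : Prop :=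
  ∀ h : Polynomial R, contentIdeal (p * h) = contentIdeal p * contentIdeal h

/-- A Gaussian ring. -/
def IsGaussianRing (R : Type*) [CommRing R] : Prop :=
  ∀ p q : Polynomial R, contentIdeal (p * q) = contentIdeal p * contentIdeal q

/-- A Prüfer ring: every finitely generated regular ideal is invertible
(in the total ring of quotients). -/
def IsPruferRing (R : Type*) [CommRing R] : Prop :=
  ∀ I : Ideal R, I.FG → (∃ r ∈ I, r ∈ nonZeroDivisors R) →
    ∃ T : FractionalIdeal (nonZeroDivisors R) (FractionRing R),
      (I : FractionalIdeal (nonZeroDivisors R) (FractionRing R)) * T = 1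

/-!
Since `I` is contained in the maximal ideal, `A ⋈ I` is local: it is the pullback of
`A → A ⧸ I ← A`. In a local ring, Prüfer means that every finitely generated regular ideal is
generated by a regular element, and a principal ideal `(a, b)` is already `(a)` or `(b)`.

For a regular `a ∈ m` and `i ∈ I`, the ideal `((a, a), (0, i))` of `A ⋈ I` is therefore
`((a, a))`, and writing `(0, i) = (a, a)(c, c + j)` gives `c = 0` and `i = a j ∈ aI`.
Conversely, if `I = gI` then `(g, g)` divides every element of `A ⋈ I` whose first coordinate `g`
divides; so a finitely generated regular ideal of `A ⋈ I` whose projection to `A` is `(g)` is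
generated by `(g, g)`.
-/

open IsLocalRing nonZeroDivisors

section
variable {R : Type*} [CommRing R]

theorem notMem_zdSet_iff {a : R} : a ∉ zdSet R ↔ a ∈ R⁰ := by
  simp only [zdSet, Set.mem_ofPred_eq, not_exists, not_and, mem_nonZeroDivisors_iff_left]
  exact forall_congr' fun _ => not_imp_not

open FractionalIdeal in
theorem exists_coeIdeal_span_singleton_mul_eq_one {g : R} (hg : g ∈ R⁰) :
    ∃ T : FractionalIdeal R⁰ (FractionRing R),
      (Ideal.span {g} : FractionalIdeal R⁰ (FractionRing R)) * T = 1 := by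
  have hu : IsUnit (algebraMap R (FractionRing R) g) := IsLocalization.map_units _ ⟨g, hg⟩
  refine ⟨spanSingleton _ ↑hu.unit⁻¹, ?_⟩
  rw [coeIdeal_span_singleton, spanSingleton_mul_spanSingleton, hu.mul_val_inv,
    spanSingleton_one]

theorem isPruferRing_iff_of_isLocalRing [IsLocalRing R] :
    IsPruferRing R ↔
      ∀ J : Ideal R, J.FG → (∃ r ∈ J, r ∈ R⁰) → ∃ g ∈ R⁰, J = Ideal.span {g} := by
  constructor
  · rintro hR J hJ ⟨r, hrJ, hr⟩
    obtain ⟨T, hT⟩ := hR J hJ ⟨r, hrJ, hr⟩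
    have hfin : {M : Ideal R | M.IsMaximal}.Finite :=
      (Set.finite_singleton (maximalIdeal R)).subset fun M hM => eq_maximalIdeal hM
    obtain ⟨⟨g, rfl⟩⟩ :=
      Ideal.IsPrincipal.of_finite_maximals_of_isUnit hfin (.of_mul_eq_one T hT)
    obtain ⟨c, rfl⟩ := Ideal.mem_span_singleton'.mp hrJ
    exact ⟨g, (mul_mem_nonZeroDivisors.mp hr).2, rfl⟩
  · intro hR J hJ hreg
    obtain ⟨g, hg, rfl⟩ := hR J hJ hreg
    exact exists_coeIdeal_span_singleton_mul_eq_one hg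

theorem IsLocalRing.span_pair_eq_span_singleton_left_or_right [IsLocalRing R] {a b x : R}
    (h : Ideal.span {a, b} = Ideal.span {x}) :
    Ideal.span {a, b} = Ideal.span {a} ∨ Ideal.span {a, b} = Ideal.span {b} := by
  obtain ⟨p, q, hx⟩ := Ideal.mem_span_pair.mp (h ▸ Ideal.mem_span_singleton_self x)
  obtain ⟨u, rfl⟩ : x ∣ a := Ideal.mem_span_singleton.mp (h ▸ Ideal.subset_span (by simp))
  rcases isUnit_or_isUnit_one_sub_self (p * u) with hpu | hpu
  · left
    rw [h, Ideal.span_singleton_mul_right_unit (isUnit_of_mul_isUnit_right hpu)]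
  · right
    refine le_antisymm ?_ (Ideal.span_mono (by simp))
    rw [h, ← Ideal.span_singleton_mul_right_unit hpu x, Ideal.span_singleton_le_span_singleton]
    exact ⟨q, by linear_combination -hx⟩

theorem forall_mem_maximalIdeal_eq_span_singleton_mul_iff [IsLocalRing R] (I : Ideal R) :
    (∀ a ∈ maximalIdeal R, a ∈ R⁰ → I = Ideal.span {a} * I) ↔
      ∀ a ∈ R⁰, I = Ideal.span {a} * I := by
  refine ⟨fun h a ha => ?_, fun h a _ => h a⟩
  by_cases hu : IsUnit a
  · rw [Ideal.span_singleton_eq_top.mpr hu, Ideal.top_mul]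
  · exact h a ((mem_maximalIdeal a).mpr hu) ha

end

section
variable (I : Ideal A)

local notation "A⋈I" => amalg (RingHom.id A) I

theorem mem_amalg_id_iff {p : A × A} : p ∈ A⋈I ↔ p.2 - p.1 ∈ I :=
  ⟨by rintro ⟨a, j, hj, rfl⟩; simpa using hj, fun h => ⟨p.1, p.2 - p.1, h, by simp⟩⟩

theorem amalg_id_eq_pullback :
    amalg (RingHom.id A) I = (Ideal.Quotient.mk I).pullback (Ideal.Quotient.mk I) := by
  ext p
  rw [mem_amalg_id_iff, ← Ideal.Quotient.eq]
  exact eq_comm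

theorem isLocalRing_amalg_id [IsLocalRing A] (hI : I ≠ ⊤) : IsLocalRing (A⋈I) := by
  have : Nontrivial (A ⧸ I) := Ideal.Quotient.nontrivial_iff.mpr hI
  have : IsLocalHom (Ideal.Quotient.mk I) :=
    IsLocalHom.of_surjective _ Ideal.Quotient.mk_surjective
  rw [amalg_id_eq_pullback]
  exact RingHom.isLocalRing_pullback _ _

def amalgDiag : A →+* A⋈I :=
  (RingHom.prod (RingHom.id A) (RingHom.id A)).codRestrict _
    fun _ => (mem_amalg_id_iff I).mpr (by simp)

def amalgFst : A⋈I →+* A :=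
  (RingHom.fst A A).comp (A⋈I).subtype

@[simp]
theorem amalgFst_amalgDiag (a : A) : amalgFst I (amalgDiag I a) = a := rfl

@[simp]
theorem amalgDiag_val (a : A) : (amalgDiag I a).val = (a, a) := rfl

theorem amalgFst_surjective : Function.Surjective (amalgFst I) :=
  fun a => ⟨amalgDiag I a, rfl⟩

theorem amalgFst_comp_amalgDiag : (amalgFst I).comp (amalgDiag I) = RingHom.id A := rfl

theorem amalgDiag_mem_nonZeroDivisors {a : A} (ha : a ∈ A⁰) : amalgDiag I a ∈ (A⋈I)⁰ := by
  refine mem_nonZeroDivisors_iff_right.mpr fun z hz => ?_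
  have hz' : z.val * (a, a) = 0 := congrArg Subtype.val hz
  exact Subtype.ext <| Prod.ext (ha.2 _ congr($hz'.1)) (ha.2 _ congr($hz'.2))

theorem fst_mem_nonZeroDivisors {x : A⋈I} (hx : x ∈ (A⋈I)⁰) : x.val.1 ∈ A⁰ := by
  refine mem_nonZeroDivisors_iff_right.mpr fun b hb => ?_
  have hi : x.val.2 - x.val.1 ∈ I := (mem_amalg_id_iff I).mp x.2
  let z : A⋈I := ⟨(b * (x.val.2 - x.val.1), 0),
    (mem_amalg_id_iff I).mpr (by simpa using I.mul_mem_left b hi)⟩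
  have hzx : z * x = 0 := Subtype.ext <| Prod.ext
    (show b * (x.val.2 - x.val.1) * x.val.1 = 0 by linear_combination (x.val.2 - x.val.1) * hb)
    (zero_mul _)
  have hbi : b * (x.val.2 - x.val.1) = 0 := congr(($(hx.2 z hzx)).val.1)
  have hbx : amalgDiag I b * x = 0 := Subtype.ext <| Prod.ext hb
    (show b * x.val.2 = 0 by linear_combination hb + hbi)
  exact congr(($(hx.2 _ hbx)).val.1)

theorem amalgDiag_dvd_of_dvd_fst {g : A} (hg : I = Ideal.span {g} * I) {y : A⋈I}
    (hy : g ∣ y.val.1) : amalgDiag I g ∣ y := by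
  obtain ⟨d, hd⟩ := hy
  obtain ⟨e, he, hge⟩ := Ideal.mem_span_singleton_mul.mp (hg.le ((mem_amalg_id_iff I).mp y.2))
  refine ⟨⟨(d, d + e), (mem_amalg_id_iff I).mpr (by simpa using he)⟩,
    Subtype.ext <| Prod.ext ?_ ?_⟩
  · exact hd
  · show y.val.2 = g * (d + e)
    linear_combination hd - hge

theorem isPruferRing_of_isPruferRing_amalg_id [IsLocalRing A] (hI : I ≠ ⊤)
    (hP : IsPruferRing (A⋈I)) : IsPruferRing A := by
  have := isLocalRing_amalg_id I hI
  rw [isPruferRing_iff_of_isLocalRing] at hP ⊢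
  rintro J hJ ⟨r, hrJ, hr⟩
  obtain ⟨x, hx, hJx⟩ := hP (J.map (amalgDiag I)) (hJ.map _)
    ⟨_, Ideal.mem_map_of_mem _ hrJ, amalgDiag_mem_nonZeroDivisors I hr⟩
  refine ⟨x.val.1, fst_mem_nonZeroDivisors I hx, ?_⟩
  calc J = (J.map (amalgDiag I)).map (amalgFst I) := by
        rw [Ideal.map_map, amalgFst_comp_amalgDiag, Ideal.map_id]
    _ = Ideal.span {x.val.1} := by rw [hJx, Ideal.map_span, Set.image_singleton]; rfl

theorem eq_span_singleton_mul_of_isPruferRing_amalg_id [IsLocalRing A] (hI : I ≠ ⊤)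
    (hP : IsPruferRing (A⋈I)) {a : A} (ha : a ∈ A⁰) : I = Ideal.span {a} * I := by
  have := isLocalRing_amalg_id I hI
  refine le_antisymm (fun i hi => ?_) Ideal.mul_le_right
  let z : A⋈I := ⟨(0, i), (mem_amalg_id_iff I).mpr (by simpa using hi)⟩
  obtain ⟨x, -, hx⟩ := isPruferRing_iff_of_isLocalRing.mp hP (Ideal.span {amalgDiag I a, z})
    (Submodule.fg_span (Set.toFinite _))
    ⟨_, Ideal.subset_span (by simp), amalgDiag_mem_nonZeroDivisors I ha⟩
  rcases span_pair_eq_span_singleton_left_or_right hx with h | h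
  · obtain ⟨w, hw⟩ : amalgDiag I a ∣ z :=
      Ideal.mem_span_singleton.mp (h ▸ Ideal.subset_span (by simp))
    have hw1 : a * w.val.1 = 0 := congr(($hw).val.1).symm
    have hw2 : a * w.val.2 = i := congr(($hw).val.2).symm
    have hwI := (mem_amalg_id_iff I).mp w.2
    rw [ha.1 _ hw1, sub_zero] at hwI
    exact Ideal.mem_span_singleton_mul.mpr ⟨w.val.2, hwI, hw2⟩
  · obtain ⟨w, hw⟩ : z ∣ amalgDiag I a :=
      Ideal.mem_span_singleton.mp (h ▸ Ideal.subset_span (by simp))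
    have ha0 : a = 0 := by simpa [z] using congr(($hw).val.1)
    exact absurd (ha0 ▸ ha) zero_notMem_nonZeroDivisors

theorem isPruferRing_amalg_id [IsLocalRing A] (hI : I ≠ ⊤) (hP : IsPruferRing A)
    (hIa : ∀ a ∈ A⁰, I = Ideal.span {a} * I) : IsPruferRing (A⋈I) := by
  have := isLocalRing_amalg_id I hI
  have : IsLocalHom (amalgFst I) := .of_surjective _ (amalgFst_surjective I)
  rw [isPruferRing_iff_of_isLocalRing] at hP ⊢
  rintro J hJ ⟨x₀, hx₀J, hx₀⟩
  obtain ⟨g, hg, hJg⟩ := hP (J.map (amalgFst I)) (hJ.map _)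
    ⟨_, Ideal.mem_map_of_mem _ hx₀J, fst_mem_nonZeroDivisors I hx₀⟩
  have hdvd : ∀ y ∈ J, amalgDiag I g ∣ y := fun y hy =>
    amalgDiag_dvd_of_dvd_fst I (hIa g hg)
      (Ideal.mem_span_singleton.mp (hJg ▸ Ideal.mem_map_of_mem (amalgFst I) hy))
  obtain ⟨y, hyJ, hyg⟩ := (Ideal.mem_map_iff_of_surjective _ (amalgFst_surjective I)).mp
    (hJg ▸ Ideal.mem_span_singleton_self g)
  -- `y = (g, g) w` with first coordinate `g` forces `w₁ = 1`, so `w` is a unit and `(g, g) ∈ J`.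
  obtain ⟨w, rfl⟩ := hdvd y hyJ
  have hw1 : amalgFst I w = 1 :=
    (mul_cancel_left_mem_nonZeroDivisors hg).mp (by simpa using hyg)
  have hw : IsUnit w := isUnit_of_map_unit (amalgFst I) w (hw1 ▸ isUnit_one)
  refine ⟨amalgDiag I g, amalgDiag_mem_nonZeroDivisors I hg,
    le_antisymm (fun y hy => Ideal.mem_span_singleton.mpr (hdvd y hy)) ?_⟩
  rw [Ideal.span_singleton_le_iff_mem]
  exact (Ideal.mul_unit_mem_iff_mem J hw).mp hyJ

end

/-- The amalgamated duplication `A ⋈ I` is Prüfer iff `A` is Prüfer and `I = aI` for all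
`a ∈ m \ Z(A)`. -/
theorem duplication_prufer_iff [IsLocalRing A] (I : Ideal A) (hI : I ≠ ⊤) :
    IsPruferRing ↥(amalg (RingHom.id A) I) ↔
      IsPruferRing A ∧
        ∀ a ∈ IsLocalRing.maximalIdeal A, a ∉ zdSet A → I = Ideal.span {a} * I := by
  simp_rw [notMem_zdSet_iff, forall_mem_maximalIdeal_eq_span_singleton_mul_iff]
  exact ⟨fun hP => ⟨isPruferRing_of_isPruferRing_amalg_id I hI hP,
      fun _ ha => eq_span_singleton_mul_of_isPruferRing_amalg_id I hI hP ha⟩,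
    fun ⟨hP, hIa⟩ => isPruferRing_amalg_id I hI hP hIa⟩
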